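/- Let d be a positive squarefree integer with d ≡ 2 (mod 4), let m, n ∈ ℤ, set β = m + n·i√d, and let t ∈ ℝ. Then all entries of the Heisenberg translation matrix T(β,t) lie in the ring ℤ[i√d] = {a + b·i√d : a, b ∈ ℤ} if and only if m is even and t ∈ 2√d·ℤ. (In particular, a translation of ℂ by β = m + n·i√d lifts to the stabiliser of q∞ in U(2,1;ℤ[i√d]) if and only if m is even, and the vertical translations T(0,t) in this stabiliser are exactly those with t ∈ 2√d·ℤ.) -/

import Mathlib

/-!
Every entry of `T(β,t)` other than the corner one is `0`, `1`, `β` or `-conj β`, all in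
`ℤ[i√d]`. The corner entry `(-|β|² + i t)/2` has real part `-(m² + n²d)/2` and imaginary
part `t/2`; since `d` is even, the first is an integer exactly when `m` is even, and the
second is in `√d·ℤ` exactly when `t ∈ 2√d·ℤ`.
-/

noncomputable section

open Complex

/-- The Heisenberg translation matrix `T(β,t)`, with rows
`(1, −conj β, (−|β|² + i t)/2)`, `(0, 1, β)`, `(0, 0, 1)`. -/
def Tmat (β : ℂ) (t : ℝ) : Matrix (Fin 3) (Fin 3) ℂ :=
  !![1, -((starRingEnd ℂ) β), ((-((‖β‖ ^ 2 : ℝ) : ℂ)) + Complex.I * (t : ℝ))/2;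
     0, 1, β;
     0, 0, 1]

/-- The ring `ℤ[i√d] = {a + b·i√d : a, b ∈ ℤ}`, as a subset of `ℂ`. -/
def Zid (d : ℕ) : Set ℂ :=
  {z | ∃ a b : ℤ, z = (a : ℂ) + (b : ℂ) * (Complex.I * ((√(d : ℝ)) : ℝ))}

section Zid

variable {d : ℕ}

lemma mem_Zid_iff {z : ℂ} :
    z ∈ Zid d ↔ (∃ a : ℤ, z.re = a) ∧ ∃ b : ℤ, z.im = b * √(d : ℝ) := by
  constructor
  · rintro ⟨a, b, rfl⟩
    exact ⟨⟨a, by simp⟩, ⟨b, by simp⟩⟩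
  · rintro ⟨⟨a, ha⟩, ⟨b, hb⟩⟩
    exact ⟨a, b, Complex.ext (by simp [ha]) (by simp [hb])⟩

lemma zero_mem_Zid : (0 : ℂ) ∈ Zid d := ⟨0, 0, by simp⟩

lemma one_mem_Zid : (1 : ℂ) ∈ Zid d := ⟨1, 0, by simp⟩

lemma neg_conj_mem_Zid {z : ℂ} (hz : z ∈ Zid d) : -(starRingEnd ℂ) z ∈ Zid d := by
  obtain ⟨⟨a, ha⟩, ⟨b, hb⟩⟩ := mem_Zid_iff.mp hz
  exact mem_Zid_iff.mpr ⟨⟨-a, by simp [ha]⟩, ⟨b, by simp [hb]⟩⟩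

end Zid

section Tmat

variable (β : ℂ) (t : ℝ)

lemma Tmat_zero_two_re : (Tmat β t 0 2).re = -‖β‖ ^ 2 / 2 := by
  simp [Tmat, -ofReal_pow]

lemma Tmat_zero_two_im : (Tmat β t 0 2).im = t / 2 := by
  simp [Tmat, -ofReal_pow]

lemma Tmat_entries_mem_Zid_iff {d : ℕ} :
    (∀ i j, Tmat β t i j ∈ Zid d) ↔ β ∈ Zid d ∧ Tmat β t 0 2 ∈ Zid d := by
  refine ⟨fun h ↦ ⟨h 1 2, h 0 2⟩, fun ⟨hβ, h02⟩ i j ↦ ?_⟩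
  fin_cases i <;> fin_cases j
  all_goals first
    | exact zero_mem_Zid | exact one_mem_Zid | exact hβ | exact h02 | exact neg_conj_mem_Zid hβ

end Tmat

lemma sq_norm_intCast_add_mul_I_sqrt (d : ℕ) (m n : ℤ) :
    ‖(m : ℂ) + (n : ℂ) * (Complex.I * ((√(d : ℝ)) : ℝ))‖ ^ 2 = ((m ^ 2 + n ^ 2 * d : ℤ) : ℝ) := by
  rw [Complex.sq_norm, Complex.normSq_apply]
  simp only [add_re, add_im, mul_re, mul_im, I_re, I_im, intCast_re, intCast_im, ofReal_re,
    ofReal_im]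
  push_cast
  nlinarith [Real.mul_self_sqrt (Nat.cast_nonneg (α := ℝ) d)]

lemma exists_intCast_eq_neg_div_two_iff (N : ℤ) : (∃ a : ℤ, -(N : ℝ) / 2 = a) ↔ 2 ∣ N := by
  constructor
  · rintro ⟨a, ha⟩
    exact ⟨-a, by exact_mod_cast (by linarith : (N : ℝ) = 2 * -a)⟩
  · rintro ⟨c, rfl⟩
    exact ⟨-c, by push_cast; ring⟩

lemma two_dvd_sq_add_sq_mul_iff {d : ℤ} (hd : 2 ∣ d) (m n : ℤ) :
    2 ∣ m ^ 2 + n ^ 2 * d ↔ 2 ∣ m := by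
  rw [Int.dvd_add_left (dvd_mul_of_dvd_right hd _)]
  exact Int.prime_two.dvd_pow_iff_dvd two_ne_zero

theorem heisenberg_translation_lift_two_mod_four_general
    (d : ℕ) (hdmod : d % 4 = 2)
    (m n : ℤ) (t : ℝ) :
    (∀ i j, Tmat ((m : ℂ) + (n : ℂ) * (Complex.I * ((√(d : ℝ)) : ℝ))) t i j ∈ Zid d) ↔
      (2 ∣ m ∧ ∃ k : ℤ, t = 2 * √(d : ℝ) * (k : ℝ)) := by
  have hd : (2 : ℤ) ∣ d := by omega
  have hβ : (m : ℂ) + (n : ℂ) * (Complex.I * ((√(d : ℝ)) : ℝ)) ∈ Zid d := ⟨m, n, rfl⟩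
  rw [Tmat_entries_mem_Zid_iff, mem_Zid_iff (z := Tmat _ t 0 2), Tmat_zero_two_re,
    Tmat_zero_two_im, sq_norm_intCast_add_mul_I_sqrt, exists_intCast_eq_neg_div_two_iff,
    two_dvd_sq_add_sq_mul_iff hd]
  simp only [hβ, true_and]
  refine and_congr_right fun _ ↦ exists_congr fun k ↦ ?_
  constructor <;> intro h <;> linarith

/-- **Lifting of lattice translations, case `d ≡ 2 (mod 4)`** (part (i) of the proof of
Proposition 3.1): for `β = m + n·i√d`, the Heisenberg translation matrix `T(β,t)` has all
its entries in `ℤ[i√d]` if and only if `m` is even and `t ∈ 2√d·ℤ`. -/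
theorem heisenberg_translation_lift_two_mod_four
    (d : ℕ) (hd0 : 0 < d) (hdsf : Squarefree d) (hdmod : d % 4 = 2)
    (m n : ℤ) (t : ℝ) :
    (∀ i j, Tmat ((m : ℂ) + (n : ℂ) * (Complex.I * ((√(d : ℝ)) : ℝ))) t i j ∈ Zid d) ↔
      (2 ∣ m ∧ ∃ k : ℤ, t = 2 * √(d : ℝ) * (k : ℝ)) :=
  heisenberg_translation_lift_two_mod_four_general d hdmod m n t

end
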